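/- Suppose a subset L of women declare false preferences, and let the 'original matching' O be the men-proposing Gale-Shapley outcome under true preferences and the 'new matching' N the outcome when women in L use their false preferences (everyone else truthful). If no woman in L is worse-off (i.e., no liar truly prefers O(her) to N(her)), then no woman at all is worse-off under N. -/

import Mathlib

namespace GS

/-- The `k` most-preferred elements of `S` according to the rank function `rank`
(lower rank = more preferred); if `S` has at most `k` elements this is all of `S`. -/
def topk {α : Type*} [DecidableEq α] (rank : α → ℕ) (k : ℕ) (S : Finset α) : Finset α :=
  S.filter fun a => (S.filter fun b => rank b < rank a).card < k

/-- An instance of the stable-matching problem with `n` women and `n` men.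
`mpref m w` is the rank man `m` assigns to woman `w` (lower = more preferred),
and `wpref w m` is the rank woman `w` assigns to man `m`. -/
structure Instance (n : ℕ) where
  mpref : Fin n → Fin n → ℕ
  wpref : Fin n → Fin n → ℕ
  mprefInj : ∀ m, Function.Injective (mpref m)
  wprefInj : ∀ w, Function.Injective (wpref w)

variable {n : ℕ}

/-- `prefers p a b` : `a` is strictly preferred to `b` under rank function `p`. -/
def prefers (p : Fin n → ℕ) (a b : Fin n) : Prop := p a < p b

/-- Given the current state `avail m` (the women who have not yet rejected man `m`),
the set of women man `m` proposes to tonight: his most-preferred available woman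
(a singleton, or empty if no woman is available). -/
def proposals (I : Instance n) (avail : Fin n → Finset (Fin n)) (m : Fin n) :
    Finset (Fin n) := topk (I.mpref m) 1 (avail m)

/-- The men proposing to woman `w` tonight. -/
def proposersOf (I : Instance n) (avail : Fin n → Finset (Fin n)) (w : Fin n) :
    Finset (Fin n) := Finset.univ.filter fun m => w ∈ proposals I avail m

/-- The men rejected by woman `w` tonight: all of tonight's proposers except
her most-preferred one. -/
def rejectedBy (I : Instance n) (avail : Fin n → Finset (Fin n)) (w : Fin n) :
    Finset (Fin n) := proposersOf I avail w \ topk (I.wpref w) 1 (proposersOf I avail w)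

/-- One night of the men-proposing Gale-Shapley algorithm. -/
def step (I : Instance n) (avail : Fin n → Finset (Fin n)) :
    Fin n → Finset (Fin n) :=
  fun m => (avail m).filter fun w => m ∉ rejectedBy I avail w

/-- `nights I t m` : the set of women who have not rejected man `m` before night `t`
(initially all women). -/
def nights (I : Instance n) (t : ℕ) : Fin n → Finset (Fin n) :=
  (step I)^[t] (fun _ => Finset.univ)

/-- The algorithm has terminated by night `T`: no man is rejected on night `T`. -/
def Stopped (I : Instance n) (T : ℕ) : Prop := step I (nights I T) = nights I T

/-- On night `T`, each man `m` serenades exactly under the window of `μ m`. -/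
def MatchesAt (I : Instance n) (T : ℕ) (μ : Fin n ≃ Fin n) : Prop :=
  ∀ m, proposals I (nights I T) m = {μ m}

/-- The bijection `μ` (from men to women) is the outcome of the men-proposing
Gale-Shapley algorithm on instance `I`: for some night `T` no rejection occurs and
every man `m` is matched with `μ m`. -/
def IsGSMatching (I : Instance n) (μ : Fin n ≃ Fin n) : Prop :=
  ∃ T, Stopped I T ∧ MatchesAt I T μ

/-- Stability of a matching `μ` (men to women): there is no unmatched pair `(w, m)`
each of whom strictly prefers the other to their partner under `μ`. -/
def Stable (I : Instance n) (μ : Fin n ≃ Fin n) : Prop :=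
  ¬ ∃ m w, μ m ≠ w ∧ I.mpref m w < I.mpref m (μ m) ∧ I.wpref w m < I.wpref w (μ.symm w)

/-- The instance in which the women in `L` replace their true preferences by the
false preference rankings `f`, everyone else being truthful. -/
def liarInstance (I : Instance n) (L : Finset (Fin n))
    (f : Fin n → Fin n → ℕ) (hf : ∀ w, Function.Injective (f w)) : Instance n where
  mpref := I.mpref
  wpref := fun w => if w ∈ L then f w else I.wpref w
  mprefInj := I.mprefInj
  wprefInj := fun w => by split_ifs; exacts [hf w, I.wprefInj w]

end GS

/-!
Let `M'` be the set of men who strictly prefer `N` to `O`. A liar `w = N m` with `m ∈ M'` who is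
not worse off would form with `m` a pair blocking `O`; hence `N` matches `M'` to truthful women.
By the blocking lemma of Gale and Sotomayor for the men-optimal matching `O`, if `M'` were
nonempty there would be a pair blocking `N` (under true preferences) whose woman lies in `N(M')`;
she is truthful, so the pair blocks `N` under the reported preferences too, contradicting the
stability of `N`. So no man prefers `N` to `O`, and a truthful woman `w` who preferred `O⁻¹ w`
to `N⁻¹ w` would form with `O⁻¹ w` a pair blocking `N`.
-/

namespace GS

variable {n : ℕ}

lemma mem_topk_one {α : Type*} [DecidableEq α] {rank : α → ℕ} {S : Finset α} {a : α} :
    a ∈ topk rank 1 S ↔ a ∈ S ∧ ∀ b ∈ S, rank a ≤ rank b := by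
  simp [topk, Finset.card_eq_zero, Finset.filter_eq_empty_iff]

lemma exists_mem_topk_one {α : Type*} [DecidableEq α] (rank : α → ℕ) {S : Finset α}
    (hS : S.Nonempty) : ∃ a, a ∈ topk rank 1 S := by
  obtain ⟨a, ha, hmin⟩ := S.exists_min_image rank hS
  exact ⟨a, mem_topk_one.2 ⟨ha, hmin⟩⟩

section Dynamics

variable (I : Instance n)

lemma nights_succ (t : ℕ) : nights I (t + 1) = step I (nights I t) :=
  Function.iterate_succ_apply' _ _ _

lemma mem_nights_succ {t : ℕ} {m w : Fin n} :
    w ∈ nights I (t + 1) m ↔ w ∈ nights I t m ∧ m ∉ rejectedBy I (nights I t) w := by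
  rw [nights_succ]
  exact Finset.mem_filter

lemma nights_subset_of_le {s t : ℕ} (h : s ≤ t) (m : Fin n) : nights I t m ⊆ nights I s m := by
  induction h with
  | refl => exact subset_rfl
  | step _ ih => exact fun w hw => ih ((mem_nights_succ I).1 hw).1

lemma nights_eq_of_stopped {T t : ℕ} (hstop : Stopped I T) (h : T ≤ t) :
    nights I t = nights I T := by
  induction h with
  | refl => rfl
  | step _ ih => rw [nights_succ, ih, hstop]

lemma exists_rejected_of_mem_of_not_mem {s t : ℕ} {m w : Fin n} (hs : w ∈ nights I s m)
    (ht : w ∉ nights I t m) : ∃ u, s ≤ u ∧ u < t ∧ m ∈ rejectedBy I (nights I u) w := by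
  induction t with
  | zero => exact absurd (nights_subset_of_le I (Nat.zero_le s) m hs) ht
  | succ t ih =>
    by_cases hw : w ∈ nights I t m
    · have hr : m ∈ rejectedBy I (nights I t) w := by
        by_contra hr
        exact ht ((mem_nights_succ I).2 ⟨hw, hr⟩)
      refine ⟨t, ?_, lt_add_one t, hr⟩
      by_contra! hts
      exact ht (nights_subset_of_le I hts m hs)
    · obtain ⟨u, hsu, hut, hu⟩ := ih hw
      exact ⟨u, hsu, by omega, hu⟩

lemma mem_proposersOf {A : Fin n → Finset (Fin n)} {m w : Fin n} :
    m ∈ proposersOf I A w ↔ w ∈ proposals I A m := by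
  simp [proposersOf]

lemma mem_proposals_of_mem_rejectedBy {A : Fin n → Finset (Fin n)} {m w : Fin n}
    (h : m ∈ rejectedBy I A w) : w ∈ proposals I A m :=
  (mem_proposersOf I).1 (Finset.mem_sdiff.1 h).1

lemma mpref_le_of_mem_proposals {s t : ℕ} {m a b : Fin n} (ha : a ∈ proposals I (nights I s) m)
    (hb : b ∈ nights I t m) (hst : s ≤ t) : I.mpref m a ≤ I.mpref m b :=
  (mem_topk_one.1 ha).2 b (nights_subset_of_le I hst m hb)

lemma top_mem_proposersOf_succ {t : ℕ} {w m : Fin n}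
    (hm : m ∈ topk (I.wpref w) 1 (proposersOf I (nights I t) w)) :
    m ∈ proposersOf I (nights I (t + 1)) w := by
  have hprop : w ∈ proposals I (nights I t) m := (mem_proposersOf I).1 (mem_topk_one.1 hm).1
  have hkept : m ∉ rejectedBy I (nights I t) w := fun hr => (Finset.mem_sdiff.1 hr).2 hm
  have hw : w ∈ nights I (t + 1) m :=
    (mem_nights_succ I).2 ⟨(mem_topk_one.1 hprop).1, hkept⟩
  exact (mem_proposersOf I).2 <| mem_topk_one.2
    ⟨hw, fun v hv => mpref_le_of_mem_proposals I hprop hv (Nat.le_succ t)⟩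

lemma exists_mem_proposersOf_wpref_le {s t : ℕ} (hst : s ≤ t) {w p : Fin n}
    (hp : p ∈ proposersOf I (nights I s) w) :
    ∃ q ∈ proposersOf I (nights I t) w, I.wpref w q ≤ I.wpref w p := by
  induction hst with
  | refl => exact ⟨p, hp, le_rfl⟩
  | step _ ih =>
    obtain ⟨q, hq, hqp⟩ := ih
    obtain ⟨r, hr⟩ := exists_mem_topk_one (I.wpref w) ⟨q, hq⟩
    exact ⟨r, top_mem_proposersOf_succ I hr, ((mem_topk_one.1 hr).2 q hq).trans hqp⟩

lemma exists_mem_proposersOf_wpref_lt_of_rejected {u t : ℕ} (hut : u ≤ t) {w m : Fin n}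
    (hm : m ∈ rejectedBy I (nights I u) w) :
    ∃ q ∈ proposersOf I (nights I t) w, I.wpref w q < I.wpref w m := by
  obtain ⟨hp, hnot_top⟩ := Finset.mem_sdiff.1 hm
  obtain ⟨p, hptop⟩ := exists_mem_topk_one (I.wpref w) ⟨m, hp⟩
  have hpm : I.wpref w p < I.wpref w m :=
    ((mem_topk_one.1 hptop).2 m hp).lt_of_ne fun h => hnot_top (I.wprefInj w h ▸ hptop)
  obtain ⟨q, hq, hqp⟩ := exists_mem_proposersOf_wpref_le I hut (mem_topk_one.1 hptop).1
  exact ⟨q, hq, hqp.trans_lt hpm⟩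

end Dynamics

section Outcome

variable {I : Instance n} {T : ℕ} {μ : Fin n ≃ Fin n}

lemma partner_mem_proposals (hstop : Stopped I T) (hmatch : MatchesAt I T μ) {t : ℕ}
    (ht : T ≤ t) (m : Fin n) : μ m ∈ proposals I (nights I t) m := by
  rw [nights_eq_of_stopped I hstop ht, hmatch m]
  exact Finset.mem_singleton_self _

lemma proposersOf_eq_of_le (hstop : Stopped I T) (hmatch : MatchesAt I T μ) {t : ℕ}
    (ht : T ≤ t) (w : Fin n) : proposersOf I (nights I t) w = {μ.symm w} := by
  ext m
  rw [mem_proposersOf, nights_eq_of_stopped I hstop ht, hmatch m, Finset.mem_singleton,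
    Finset.mem_singleton, Equiv.eq_symm_apply, eq_comm]

lemma partner_mem_nights (hstop : Stopped I T) (hmatch : MatchesAt I T μ) (t : ℕ) (m : Fin n) :
    μ m ∈ nights I t m :=
  nights_subset_of_le I (le_max_left t T) m
    (mem_topk_one.1 (partner_mem_proposals hstop hmatch (le_max_right t T) m)).1

lemma mpref_le_partner_of_mem_proposals (hstop : Stopped I T) (hmatch : MatchesAt I T μ)
    {t : ℕ} {m w : Fin n} (h : w ∈ proposals I (nights I t) m) :
    I.mpref m w ≤ I.mpref m (μ m) :=
  mpref_le_of_mem_proposals I h (partner_mem_nights hstop hmatch t m) le_rfl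

lemma not_mem_rejectedBy_partner (hstop : Stopped I T) (hmatch : MatchesAt I T μ) (u : ℕ)
    (m : Fin n) : m ∉ rejectedBy I (nights I u) (μ m) :=
  ((mem_nights_succ I).1 (partner_mem_nights hstop hmatch (u + 1) m)).2

lemma wpref_partner_lt_of_rejected (hstop : Stopped I T) (hmatch : MatchesAt I T μ) {u : ℕ}
    {m w : Fin n} (hm : m ∈ rejectedBy I (nights I u) w) :
    I.wpref w (μ.symm w) < I.wpref w m := by
  obtain ⟨q, hq, hqm⟩ := exists_mem_proposersOf_wpref_lt_of_rejected I (le_max_left u T) hm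
  rw [proposersOf_eq_of_le hstop hmatch (le_max_right u T), Finset.mem_singleton] at hq
  exact hq ▸ hqm

lemma exists_rejected_of_mpref_lt (hstop : Stopped I T) (hmatch : MatchesAt I T μ) {t : ℕ}
    {m w : Fin n} (hw : w ∈ nights I t m) (hlt : I.mpref m w < I.mpref m (μ m)) :
    ∃ u, t ≤ u ∧ m ∈ rejectedBy I (nights I u) w := by
  have hgone : w ∉ nights I (max t T) m := fun h =>
    ((mem_topk_one.1 (partner_mem_proposals hstop hmatch (le_max_right t T) m)).2 w h).not_gt hlt
  obtain ⟨u, htu, -, hu⟩ := exists_rejected_of_mem_of_not_mem I hw hgone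
  exact ⟨u, htu, hu⟩

lemma wpref_partner_lt_of_mpref_lt (hstop : Stopped I T) (hmatch : MatchesAt I T μ)
    {m w : Fin n} (hlt : I.mpref m w < I.mpref m (μ m)) :
    I.wpref w (μ.symm w) < I.wpref w m := by
  obtain ⟨u, -, hu⟩ :=
    exists_rejected_of_mpref_lt hstop hmatch (t := 0) (Finset.mem_univ w) hlt
  exact wpref_partner_lt_of_rejected hstop hmatch hu

theorem IsGSMatching.stable (h : IsGSMatching I μ) : Stable I μ := by
  obtain ⟨T, hstop, hmatch⟩ := h
  rintro ⟨m, w, -, hm, hw⟩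
  exact (wpref_partner_lt_of_mpref_lt hstop hmatch hm).not_gt hw

end Outcome

noncomputable def firstProposalNight (I : Instance n) (μ : Fin n ≃ Fin n) (w : Fin n) : ℕ :=
  sInf {t | w ∈ proposals I (nights I t) (μ.symm w)}

section Blocking

variable {I : Instance n} {T : ℕ} {μ : Fin n ≃ Fin n}

lemma mem_proposals_firstProposalNight (hstop : Stopped I T) (hmatch : MatchesAt I T μ)
    (w : Fin n) : w ∈ proposals I (nights I (firstProposalNight I μ w)) (μ.symm w) :=
  Nat.sInf_mem (s := {t | w ∈ proposals I (nights I t) (μ.symm w)})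
    ⟨T, by simpa using partner_mem_proposals hstop hmatch le_rfl (μ.symm w)⟩

lemma not_mem_proposals_of_lt_firstProposalNight {t : ℕ} {w : Fin n}
    (ht : t < firstProposalNight I μ w) : w ∉ proposals I (nights I t) (μ.symm w) :=
  Nat.notMem_of_lt_sInf ht

lemma lt_firstProposalNight_of_rejected (hstop : Stopped I T) (hmatch : MatchesAt I T μ)
    {u : ℕ} {m w : Fin n} (hm : m ∈ rejectedBy I (nights I u) w) :
    u < firstProposalNight I μ (μ m) := by
  by_contra! hle
  have hprop := mem_proposals_of_mem_rejectedBy I hm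
  have hfirst := mem_proposals_firstProposalNight hstop hmatch (μ m)
  rw [Equiv.symm_apply_apply] at hfirst
  have hw : w = μ m := I.mprefInj m <| le_antisymm
    (mpref_le_partner_of_mem_proposals hstop hmatch hprop)
    (mpref_le_of_mem_proposals I hfirst (mem_topk_one.1 hprop).1 hle)
  exact not_mem_rejectedBy_partner hstop hmatch u m (hw ▸ hm)

def IsBlockingPair (I : Instance n) (μ : Fin n ≃ Fin n) (m w : Fin n) : Prop :=
  μ m ≠ w ∧ I.mpref m w < I.mpref m (μ m) ∧ I.wpref w m < I.wpref w (μ.symm w)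

lemma isBlockingPair_of_le {ν : Fin n ≃ Fin n} {m w : Fin n} (hne : ν m ≠ w)
    (hm : I.mpref m w ≤ I.mpref m (ν m)) (hw : I.wpref w m < I.wpref w (ν.symm w)) :
    IsBlockingPair I ν m w :=
  ⟨hne, hm.lt_of_ne fun h => hne (I.mprefInj m h).symm, hw⟩

lemma Stable.not_isBlockingPair (h : Stable I μ) (m w : Fin n) : ¬ IsBlockingPair I μ m w :=
  fun hb => h ⟨m, w, hb⟩

def gainers (I : Instance n) (μ ν : Fin n ≃ Fin n) : Finset (Fin n) :=
  Finset.univ.filter fun m => I.mpref m (ν m) < I.mpref m (μ m)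

lemma mem_gainers {ν : Fin n ≃ Fin n} {m : Fin n} :
    m ∈ gainers I μ ν ↔ I.mpref m (ν m) < I.mpref m (μ m) := by
  simp [gainers]

lemma isBlockingPair_of_not_mem_gainers (hstop : Stopped I T) (hmatch : MatchesAt I T μ)
    {ν : Fin n ≃ Fin n} {m' : Fin n} (hm' : m' ∈ gainers I μ ν)
    (hm : μ.symm (ν m') ∉ gainers I μ ν) : IsBlockingPair I ν (μ.symm (ν m')) (ν m') := by
  refine isBlockingPair_of_le (fun h => hm ?_) ?_ ?_
  · rwa [ν.injective h]
  · simpa using not_lt.1 (mem_gainers.not.1 hm)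
  · simpa using wpref_partner_lt_of_mpref_lt hstop hmatch (mem_gainers.1 hm')

/-- Pick `w ∈ ν(gainers)` with `firstProposalNight I μ w` maximal. She rejected the gainer `ν⁻¹ w`
before that night, so her best suitor `m` on the previous night beats `ν⁻¹ w`. Since `m` is later
rejected by `w`, were he a gainer his own `μ`-partner, also in `ν(gainers)`, would be first proposed
to even later. Hence `(m, w)` blocks `ν`. -/
lemma exists_isBlockingPair_of_mapsTo (hstop : Stopped I T) (hmatch : MatchesAt I T μ)
    {ν : Fin n ≃ Fin n} (hne : (gainers I μ ν).Nonempty)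
    (hmaps : ∀ m ∈ gainers I μ ν, ν.symm (μ m) ∈ gainers I μ ν) :
    ∃ m w, IsBlockingPair I ν m w ∧ ν.symm w ∈ gainers I μ ν := by
  set G := gainers I μ ν
  set s := firstProposalNight I μ
  have hpartner : ∀ m ∈ G, μ m ∈ G.image ν := fun m hm =>
    Finset.mem_image.2 ⟨_, hmaps m hm, ν.apply_symm_apply _⟩
  obtain ⟨w, hwG, hwmax⟩ := (G.image ν).exists_max_image s (hne.image ν)
  obtain ⟨m', hm'G, rfl⟩ := Finset.mem_image.1 hwG
  obtain ⟨u, -, hu⟩ := exists_rejected_of_mpref_lt hstop hmatch (t := 0) (Finset.mem_univ _)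
    (mem_gainers.1 hm'G)
  obtain ⟨k, hk⟩ := Nat.exists_eq_add_of_lt <|
    (lt_firstProposalNight_of_rejected hstop hmatch hu).trans_le (hwmax _ (hpartner m' hm'G))
  obtain ⟨q, hq, hqm'⟩ :=
    exists_mem_proposersOf_wpref_lt_of_rejected I (Nat.le_add_right u k) hu
  obtain ⟨m, hmtop⟩ := exists_mem_topk_one (I.wpref (ν m')) ⟨q, hq⟩
  have hprop : ν m' ∈ proposals I (nights I (u + k)) m :=
    (mem_proposersOf I).1 (mem_topk_one.1 hmtop).1
  have hμm : μ m ≠ ν m' := fun h => not_mem_proposals_of_lt_firstProposalNight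
    (hk ▸ lt_add_one (u + k)) (by simpa [← h] using hprop)
  have hmw : I.mpref m (ν m') < I.mpref m (μ m) :=
    (mpref_le_partner_of_mem_proposals hstop hmatch hprop).lt_of_ne
      fun h => hμm (I.mprefInj m h).symm
  obtain ⟨u', hu'k, hu'⟩ := exists_rejected_of_mpref_lt hstop hmatch
    (mem_topk_one.1 ((mem_proposersOf I).1 (top_mem_proposersOf_succ I hmtop))).1 hmw
  have hmG : m ∉ G := fun hmG => by
    have := (lt_firstProposalNight_of_rejected hstop hmatch hu').trans_le
      (hwmax _ (hpartner m hmG))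
    omega
  refine ⟨m, ν m', isBlockingPair_of_le (fun h => hmG (ν.injective h ▸ hm'G))
    (hmw.le.trans (not_lt.1 (mem_gainers.not.1 hmG))) ?_, by simpa using hm'G⟩
  simpa using ((mem_topk_one.1 hmtop).2 q hq).trans_lt hqm'

theorem IsGSMatching.exists_isBlockingPair (hμ : IsGSMatching I μ) {ν : Fin n ≃ Fin n}
    (hne : (gainers I μ ν).Nonempty) :
    ∃ m w, IsBlockingPair I ν m w ∧ ν.symm w ∈ gainers I μ ν := by
  obtain ⟨T, hstop, hmatch⟩ := hμ
  by_cases hmaps : ∀ m' ∈ gainers I μ ν, μ.symm (ν m') ∈ gainers I μ ν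
  · refine exists_isBlockingPair_of_mapsTo hstop hmatch hne fun m hm => ?_
    have hσ : (gainers I μ ν).map (ν.trans μ.symm).toEmbedding = gainers I μ ν :=
      Finset.map_eq_of_subset fun _ h => by
        obtain ⟨m', hm', rfl⟩ := Finset.mem_map.1 h
        exact hmaps m' hm'
    rw [← hσ] at hm
    obtain ⟨m', hm', rfl⟩ := Finset.mem_map.1 hm
    simpa using hm'
  · push Not at hmaps
    obtain ⟨m', hm', hm⟩ := hmaps
    exact ⟨_, _, isBlockingPair_of_not_mem_gainers hstop hmatch hm' hm, by simpa using hm'⟩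

end Blocking

lemma IsBlockingPair.liarInstance_of_not_mem {I : Instance n} {L : Finset (Fin n)}
    {f : Fin n → Fin n → ℕ} {hf : ∀ w, Function.Injective (f w)} {ν : Fin n ≃ Fin n}
    {m w : Fin n} (h : IsBlockingPair I ν m w) (hw : w ∉ L) :
    IsBlockingPair (liarInstance I L f hf) ν m w := by
  simpa [IsBlockingPair, liarInstance, hw] using h

end GS

open GS in
/-- If the lying women `L` are all not worse-off (under their true preferences),
then no woman at all is worse-off under the new matching. -/
theorem no_liar_worse_off_implies_no_woman_worse_off (n : ℕ) (I : GS.Instance n)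
    (L : Finset (Fin n)) (f : Fin n → Fin n → ℕ) (hf : ∀ w, Function.Injective (f w))
    (O N : Fin n ≃ Fin n)
    (hO : IsGSMatching I O) (hN : IsGSMatching (liarInstance I L f hf) N)
    (hliars : ∀ w ∈ L, ¬ prefers (I.wpref w) (O.symm w) (N.symm w)) :
    ∀ w, ¬ prefers (I.wpref w) (O.symm w) (N.symm w) := by
  have hNst := hN.stable
  have htruthful : ∀ m ∈ gainers I O N, N m ∉ L := fun m hm hL => by
    obtain ⟨T, hstop, hmatch⟩ := hO
    exact hliars _ hL <| by
      simpa [prefers] using wpref_partner_lt_of_mpref_lt hstop hmatch (mem_gainers.1 hm)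
  have hno_gainers : ∀ m, m ∉ gainers I O N := fun m₀ hm₀ => by
    obtain ⟨m, w, hblock, hgain⟩ := hO.exists_isBlockingPair ⟨m₀, hm₀⟩
    exact hNst.not_isBlockingPair m w
      (hblock.liarInstance_of_not_mem (by simpa using htruthful _ hgain))
  intro w hw
  by_cases hwL : w ∈ L
  · exact hliars w hwL hw
  have hne : N (O.symm w) ≠ w := fun h => hw.ne (congrArg _ (N.symm_apply_eq.2 h.symm).symm)
  have hle : I.mpref (O.symm w) w ≤ I.mpref (O.symm w) (N (O.symm w)) := by
    simpa using not_lt.1 (mem_gainers.not.1 (hno_gainers (O.symm w)))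
  exact hNst.not_isBlockingPair _ _
    ((isBlockingPair_of_le hne hle hw).liarInstance_of_not_mem hwL)
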